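/- arXiv:2006.10438 — 6 statements merged into one kernel-verified Lean document; each statement's English description precedes it below -/
import Mathlib

section
/- Let k be a field and A a bicommutative Hopf algebra over k. If A has a finite volume (i.e. A admits a normalized integral σ and a normalized cointegral λ with λ(σ) ≠ 0), then A is finite-dimensional as a k-vector space. (Corollary of the self-duality of A induced by integrals along the multiplication.) -/
open TensorProduct

/-- A coalgebra is cocommutative if composing the comultiplication with the braiding
gives back the comultiplication. -/
def IsCocomm (k A : Type*) [CommSemiring k] [AddCommMonoid A] [Module k A]
    [Coalgebra k A] : Prop :=
  ∀ a : A, (TensorProduct.comm k A A) (Coalgebra.comul (R := k) a) = Coalgebra.comul (R := k) a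

/-- A normalized integral of a bialgebra `A` is an element `σ` with `a * σ = ε(a) • σ`
for all `a` and `ε(σ) = 1`. -/
def IsNormalizedIntegral (k A : Type*) [CommSemiring k] [Semiring A] [Bialgebra k A]
    (σ : A) : Prop :=
  (∀ a : A, a * σ = Coalgebra.counit (R := k) a • σ) ∧ Coalgebra.counit (R := k) σ = 1

/-- A normalized cointegral of a bialgebra `A` is a linear functional `λ` with `λ(1) = 1`
such that applying `id ⊗ λ` to `Δ(a)` and identifying `A ⊗ k` with `A` yields `λ(a) • 1`. -/
def IsNormalizedCointegral (k A : Type*) [CommSemiring k] [Semiring A] [Bialgebra k A]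
    (lam : A →ₗ[k] k) : Prop :=
  lam 1 = 1 ∧ ∀ a : A,
    (TensorProduct.rid k A)
      ((TensorProduct.map (LinearMap.id : A →ₗ[k] A) lam) (Coalgebra.comul (R := k) a))
      = lam a • (1 : A)

/-! If `σ` is an integral of a commutative Hopf algebra, then `Δσ · (c ⊗ 1) = Δσ · (1 ⊗ S c)`
for every `c`, because `c ⊗ 1 = ∑ Δ(c₁) (1 ⊗ S c₂)` and `Δσ · Δ(c₁) = ε(c₁) Δσ`. Applying the
cointegral `λ` to the second tensor factor turns the left side into `λ(σ) c` and the right side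
into a linear combination of the first factors `σ₁` of one fixed finite expression of `Δσ`.
So when `λ(σ) ≠ 0` these finitely many `σ₁` span `A`. -/

section Slice

variable {k A : Type*} [CommSemiring k] [Semiring A] [Algebra k A]

theorem rid_lTensor_mul_tmul_one (f : A →ₗ[k] k) (x : A ⊗[k] A) (c : A) :
    TensorProduct.rid k A (f.lTensor A (x * (c ⊗ₜ[k] 1))) =
      TensorProduct.rid k A (f.lTensor A x) * c := by
  induction x using TensorProduct.induction_on with
  | zero => simp
  | tmul a b => simp [Algebra.TensorProduct.tmul_mul_tmul]
  | add x y hx hy => simp only [add_mul, map_add, hx, hy]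

theorem rid_lTensor_mul_one_tmul_mem_span {ι : Type*} (s : Finset ι) (a b : ι → A)
    (f : A →ₗ[k] k) (w : A) :
    TensorProduct.rid k A (f.lTensor A ((∑ i ∈ s, a i ⊗ₜ[k] b i) * (1 ⊗ₜ[k] w))) ∈
      Submodule.span k (a '' s) := by
  simp only [Finset.sum_mul, Algebra.TensorProduct.tmul_mul_tmul, mul_one, map_sum,
    LinearMap.lTensor_tmul, TensorProduct.rid_tmul]
  exact Submodule.sum_mem _ fun i hi => Submodule.smul_mem _ _ (Submodule.subset_span ⟨i, hi, rfl⟩)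

end Slice

section HopfAlgebra

open Coalgebra HopfAlgebra

variable {k A : Type*} [CommSemiring k]

theorem sum_comul_mul_one_tmul_antipode [Semiring A] [HopfAlgebra k A] {ι : Type*} {c : A}
    (ℛc : Repr k c ι) :
    ∑ i ∈ ℛc.index, comul (R := k) (ℛc.left i) * (1 ⊗ₜ[k] antipode k (ℛc.right i)) =
      c ⊗ₜ[k] 1 := by
  set Φ : A ⊗[k] A →ₗ[k] A ⊗[k] A :=
    (LinearMap.mul' k A ∘ₗ (antipode k).lTensor A).lTensor A ∘ₗ
      (TensorProduct.assoc k A A A).toLinearMap ∘ₗ (comul (R := k)).rTensor A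
  have hΦ : ∀ u v : A, Φ (u ⊗ₜ v) = comul (R := k) u * (1 ⊗ₜ[k] antipode k v) := by
    intro u v
    simp only [Φ, LinearMap.comp_apply, LinearMap.rTensor_tmul, LinearEquiv.coe_coe]
    induction comul (R := k) u using TensorProduct.induction_on with
    | zero => simp
    | tmul x y => simp [Algebra.TensorProduct.tmul_mul_tmul]
    | add x y hx hy => simp only [add_tmul, map_add, hx, hy, add_mul]
  calc ∑ i ∈ ℛc.index, comul (R := k) (ℛc.left i) * (1 ⊗ₜ[k] antipode k (ℛc.right i))
      = Φ (comul c) := by simp only [← ℛc.eq, map_sum, hΦ]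
    _ = c ⊗ₜ[k] 1 := by
      simp only [Φ, LinearMap.comp_apply, LinearEquiv.coe_coe, coassoc_apply,
        ← LinearMap.lTensor_comp_apply, LinearMap.comp_assoc, mul_antipode_lTensor_comul]
      rw [LinearMap.lTensor_comp_apply, lTensor_counit_comul]
      simp

theorem comul_mul_comul_eq_counit_smul [CommSemiring A] [Bialgebra k A] {σ : A}
    (hσ : ∀ a : A, a * σ = counit (R := k) a • σ) (c : A) :
    comul (R := k) σ * comul c = counit (R := k) c • comul (R := k) σ := by
  rw [← Bialgebra.comul_mul, mul_comm, hσ c, map_smul]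

theorem comul_mul_tmul_one_eq_comul_mul_one_tmul_antipode [CommSemiring A] [HopfAlgebra k A]
    {σ : A} (hσ : ∀ a : A, a * σ = counit (R := k) a • σ) (c : A) :
    comul (R := k) σ * (c ⊗ₜ[k] 1) = comul (R := k) σ * (1 ⊗ₜ[k] antipode k c) := by
  calc comul (R := k) σ * (c ⊗ₜ[k] 1)
      = ∑ i ∈ (ℛ k c).index, comul (R := k) σ * comul (R := k) ((ℛ k c).left i) *
          (1 ⊗ₜ[k] antipode k ((ℛ k c).right i)) := by
        simp only [← sum_comul_mul_one_tmul_antipode (ℛ k c), Finset.mul_sum, mul_assoc]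
    _ = comul (R := k) σ * (1 ⊗ₜ[k] antipode k
          (∑ i ∈ (ℛ k c).index, counit (R := k) ((ℛ k c).left i) • (ℛ k c).right i)) := by
        simp only [comul_mul_comul_eq_counit_smul hσ, smul_mul_assoc, map_sum, map_smul,
          tmul_sum, tmul_smul, Finset.mul_sum, mul_smul_comm]
    _ = comul (R := k) σ * (1 ⊗ₜ[k] antipode k c) := by rw [sum_counit_smul]

end HopfAlgebra

section FiniteVolume

open Coalgebra HopfAlgebra

theorem span_comul_left_eq_top {k A : Type*} [Field k] [CommRing A] [HopfAlgebra k A] {σ : A}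
    (hσ : ∀ a : A, a * σ = counit (R := k) a • σ) {lam : A →ₗ[k] k}
    (hlam : ∀ a : A, TensorProduct.rid k A (lam.lTensor A (comul (R := k) a)) = lam a • 1)
    (hvol : lam σ ≠ 0) {ι : Type*} (ℛσ : Repr k σ ι) :
    Submodule.span k (ℛσ.left '' ℛσ.index) = ⊤ := by
  refine eq_top_iff.mpr fun c _ => ?_
  have hc : lam σ • c = TensorProduct.rid k A
      (lam.lTensor A (comul (R := k) σ * (1 ⊗ₜ[k] antipode k c))) := by
    rw [← comul_mul_tmul_one_eq_comul_mul_one_tmul_antipode hσ, rid_lTensor_mul_tmul_one, hlam,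
      smul_one_mul]
  have hmem := rid_lTensor_mul_one_tmul_mem_span ℛσ.index ℛσ.left ℛσ.right lam (antipode k c)
  rw [ℛσ.eq, ← hc] at hmem
  simpa [hvol] using Submodule.smul_mem _ (lam σ)⁻¹ hmem

end FiniteVolume

theorem finiteDimensional_of_finite_volume_general
    (k A : Type*) [Field k] [CommRing A] [HopfAlgebra k A]
    (σ : A) (lam : A →ₗ[k] k)
    (hσ : IsNormalizedIntegral k A σ) (hlam : IsNormalizedCointegral k A lam)
    (hvol : lam σ ≠ 0) :
    FiniteDimensional k A := by
  classical
  let ℛσ := Coalgebra.Repr.arbitrary k σ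
  exact ⟨⟨ℛσ.index.image ℛσ.left, by
    rw [Finset.coe_image, span_comul_left_eq_top hσ.1 hlam.2 hvol]⟩⟩

/-- A bicommutative Hopf algebra with a finite volume (a normalized integral `σ` and a
normalized cointegral `λ` with `λ(σ) ≠ 0`) is finite-dimensional. -/
theorem finiteDimensional_of_finite_volume
    (k A : Type*) [Field k] [CommRing A] [HopfAlgebra k A] (hcc : IsCocomm k A)
    (σ : A) (lam : A →ₗ[k] k)
    (hσ : IsNormalizedIntegral k A σ) (hlam : IsNormalizedCointegral k A lam)
    (hvol : lam σ ≠ 0) :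
    FiniteDimensional k A :=
  finiteDimensional_of_finite_volume_general k A σ lam hσ hlam hvol
end

section
/- Let k be a field and A a bicommutative Hopf algebra over k with a normalized integral σ and a normalized cointegral λ satisfying λ(σ) ≠ 0. Then A is finite-dimensional over k and (Module.finrank k A : k) * λ(σ) = 1; in other words, the inverse of the inverse volume λ(σ) equals the image of dim_k A in k. -/
open TensorProduct

/-! The integral satisfies the Larson–Sweedler identity `(1 ⊗ a) Δσ = (S a ⊗ 1) Δσ`. Applying
`λ ⊗ id` to it and using cocommutativity turns it into `λ(σ) a = ∑ λ(S(a) σ₁) σ₂`: the operator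
`λ(σ) • id` has finite rank, so `A` is finite-dimensional as `λ(σ) ≠ 0`, and its trace is
`∑ λ(S(σ₂) σ₁) = ε(σ) λ(1) = 1`. -/

namespace Coalgebra

variable {R C ι : Type*} [CommSemiring R] [AddCommMonoid C] [Module R C] [Coalgebra R C] {c : C}

lemma sum_smul_counit (r : Repr R c ι) :
    ∑ i ∈ r.index, counit (R := R) (r.right i) • r.left i = c := by
  simpa only [map_sum, _root_.TensorProduct.rid_tmul, one_smul] using
    congr(_root_.TensorProduct.rid R C $(sum_tmul_counit_eq (R := R) r))

@[simps]
def Repr.swap [IsCocomm R C] (r : Repr R c ι) : Repr R c ι where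
  index := r.index
  left := r.right
  right := r.left
  eq := by rw [← comm_comul R c, ← r.eq, map_sum]; rfl

end Coalgebra

section Bialgebra

open Coalgebra

variable {k A ι : Type*} [CommSemiring k] [Semiring A] [Bialgebra k A]

lemma sum_cointegral_smul_of_isCocomm [Coalgebra.IsCocomm k A] {lam : A →ₗ[k] k}
    (hlam : ∀ a : A, TensorProduct.rid k A (lam.lTensor A (comul a)) = lam a • (1 : A))
    {a : A} (r : Repr k a ι) :
    ∑ i ∈ r.index, lam (r.left i) • r.right i = lam a • (1 : A) := by
  simp [← hlam, ← r.swap.eq, map_sum]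

end Bialgebra

section HopfAlgebra

open Coalgebra HopfAlgebra

variable {k A ι : Type*} [CommSemiring k] [Semiring A] [HopfAlgebra k A]

lemma sum_antipode_tmul_one_mul_comul {a : A} (r : Repr k a ι) :
    ∑ i ∈ r.index, (antipode k (r.left i) ⊗ₜ[k] (1 : A)) * comul (r.right i) = 1 ⊗ₜ[k] a := by
  let Θ : A ⊗[k] (A ⊗[k] A) →ₗ[k] A ⊗[k] A :=
    (LinearMap.mul' k A ∘ₗ (antipode k).rTensor A).rTensor A ∘ₗ
      (TensorProduct.assoc k A A A).symm.toLinearMap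
  have hΘ : ∀ x y, Θ (x ⊗ₜ y) = (antipode k x ⊗ₜ[k] (1 : A)) * y := by
    intro x y
    induction y using TensorProduct.induction_on with
    | zero => simp
    | tmul y z => simp [Θ]
    | add y z hy hz => simp only [tmul_add, map_add, hy, hz, mul_add]
  calc ∑ i ∈ r.index, (antipode k (r.left i) ⊗ₜ[k] (1 : A)) * comul (r.right i)
      = Θ (comul.lTensor A (comul a)) := by simp [← r.eq, map_sum, hΘ]
    _ = (Algebra.linearMap k A ∘ₗ counit).rTensor A (comul a) := by
      rw [← coassoc_apply, ← mul_antipode_rTensor_comul]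
      simp [Θ, ← LinearMap.rTensor_comp_apply, LinearMap.comp_assoc]
    _ = 1 ⊗ₜ[k] a := by
      rw [LinearMap.rTensor_comp_apply, rTensor_counit_comul]
      simp

lemma one_tmul_mul_comul_eq_antipode_tmul_one_mul_comul {σ : A}
    (hσ : ∀ b : A, b * σ = counit (R := k) b • σ) (a : A) :
    (1 ⊗ₜ[k] a) * comul σ = (antipode k a ⊗ₜ[k] (1 : A)) * comul σ := by
  let r := ℛ k a
  calc (1 ⊗ₜ[k] a) * comul σ
      = ∑ i ∈ r.index, (antipode k (r.left i) ⊗ₜ[k] (1 : A)) * comul (r.right i * σ) := by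
        simp only [← sum_antipode_tmul_one_mul_comul r, Finset.sum_mul, mul_assoc,
          Bialgebra.comul_mul]
    _ = ∑ i ∈ r.index, counit (R := k) (r.right i) • ((antipode k (r.left i) ⊗ₜ[k] (1 : A))
          * comul σ) := by
        simp only [hσ, map_smul, mul_smul_comm]
    _ = (antipode k a ⊗ₜ[k] (1 : A)) * comul σ := by
        simp only [← smul_mul_assoc, smul_tmul', ← Finset.sum_mul, ← sum_tmul, ← map_smul,
          ← map_sum, sum_smul_counit]

theorem cointegral_smul_id_eq_sum_smulRight [Coalgebra.IsCocomm k A] {σ : A} {lam : A →ₗ[k] k}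
    (hσ : ∀ b : A, b * σ = counit (R := k) b • σ)
    (hlam : ∀ a : A, TensorProduct.rid k A (lam.lTensor A (comul a)) = lam a • (1 : A))
    (r : Repr k σ ι) :
    lam σ • LinearMap.id = ∑ i ∈ r.index,
      (lam ∘ₗ LinearMap.mulRight k (r.left i) ∘ₗ antipode k).smulRight (r.right i) := by
  ext a
  let Λ : A ⊗[k] A →ₗ[k] A := (TensorProduct.lid k A).toLinearMap ∘ₗ lam.rTensor A
  have key := congrArg Λ (one_tmul_mul_comul_eq_antipode_tmul_one_mul_comul hσ a)
  simp only [← r.eq, Finset.mul_sum, map_sum, Algebra.TensorProduct.tmul_mul_tmul, one_mul] at key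
  calc (lam σ • LinearMap.id : A →ₗ[k] A) a = a * (lam σ • 1) := by simp
    _ = ∑ i ∈ r.index, lam (r.left i) • (a * r.right i) := by
        simp [← sum_cointegral_smul_of_isCocomm hlam r, Finset.mul_sum]
    _ = _ := by simpa [Λ] using key

end HopfAlgebra

theorem FiniteDimensional.of_smul_id_eq_sum_smulRight {K V ι : Type*} [Field K]
    [AddCommGroup V] [Module K V] {c : K} (hc : c ≠ 0) (s : Finset ι) (f : ι → Module.Dual K V)
    (x : ι → V) (h : c • LinearMap.id = ∑ i ∈ s, (f i).smulRight (x i)) :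
    FiniteDimensional K V := by
  classical
  refine ⟨⟨s.image x, eq_top_iff.2 fun v _ => ?_⟩⟩
  have hv : v = c⁻¹ • ∑ i ∈ s, f i v • x i := by
    simpa [hc] using congr(c⁻¹ • $(h) v)
  rw [hv]
  exact Submodule.smul_mem _ _ (Submodule.sum_mem _ fun i hi => Submodule.smul_mem _ _
    (Submodule.subset_span (by simpa using ⟨i, hi, rfl⟩)))

/-- For a bicommutative Hopf algebra `A` over `k` with a normalized integral `σ` and a
normalized cointegral `λ` with `λ(σ) ≠ 0`, `A` is finite-dimensional and
`(dim_k A : k) * λ(σ) = 1`: the inverse of the inverse volume is the image of `dim_k A` in `k`. -/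
theorem finrank_mul_inverse_volume_eq_one
    (k A : Type*) [Field k] [CommRing A] [HopfAlgebra k A] (hcc : IsCocomm k A)
    (σ : A) (lam : A →ₗ[k] k)
    (hσ : IsNormalizedIntegral k A σ) (hlam : IsNormalizedCointegral k A lam)
    (hvol : lam σ ≠ 0) :
    FiniteDimensional k A ∧ (Module.finrank k A : k) * lam σ = 1 := by
  have : Coalgebra.IsCocomm k A := ⟨LinearMap.ext hcc⟩
  let r := Coalgebra.Repr.arbitrary k σ
  have hid := cointegral_smul_id_eq_sum_smulRight hσ.1 hlam.2 r
  have hfin : FiniteDimensional k A := .of_smul_id_eq_sum_smulRight hvol _ _ _ hid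
  refine ⟨hfin, ?_⟩
  have htrace := congrArg (LinearMap.trace k A) hid
  rw [map_smul, LinearMap.trace_id, map_sum] at htrace
  simp only [LinearMap.trace_smulRight, LinearMap.comp_apply, LinearMap.mulRight_apply,
    ← map_sum] at htrace
  have hantipode : ∑ i ∈ r.index, HopfAlgebra.antipode k (r.right i) * r.left i
      = algebraMap k A (Coalgebra.counit σ) :=
    HopfAlgebra.sum_antipode_mul_eq_algebraMap_counit r.swap
  rw [hantipode, hσ.2, map_one, hlam.1] at htrace
  rwa [mul_comm, ← smul_eq_mul]
end

section
/- Let k be a field and let A, B be bicommutative Hopf algebras over k. Equip A ⊗[k] B with its standard tensor-product Hopf algebra structure. If A ⊗[k] B has a finite volume (i.e. admits a normalized integral σ and a normalized cointegral λ with λ(σ) ≠ 0), then both A and B have a finite volume. -/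
open TensorProduct

universe u

/-! Cointegrals of a bialgebra `A` are compared in the convolution algebra of functionals
`A →ₗ[k] k`, where `f * λ = f(1) • λ` for every cointegral `λ`; cocommutativity makes this
algebra commutative, so a normalized cointegral spans all cointegrals. In the commutative
algebra `A ⊗ B` a normalized integral `σ` is unique, hence `σ = σ_A ⊗ σ_B` for its images
under `id ⊗ ε` and `ε ⊗ id`; and every slice `a ↦ λ(a ⊗ b)` of a cointegral `λ` of `A ⊗ B`
is a cointegral of `A`. Comparing the slice at `σ_B` with the normalized slice at `1` gives
`λ(σ) = λ(1 ⊗ σ_B) · λ(σ_A ⊗ 1)`, so `a ↦ λ(a ⊗ 1)` does not vanish on `σ_A`. The factor `B`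
is handled through the symmetry `A ⊗ B ≃ B ⊗ A`. -/

def HasFiniteVolume (k A : Type*) [CommSemiring k] [Semiring A] [Bialgebra k A] : Prop :=
  ∃ (σ : A) (lam : A →ₗ[k] k),
    IsNormalizedIntegral k A σ ∧ IsNormalizedCointegral k A lam ∧ lam σ ≠ 0

def IsCointegral (k A : Type*) [CommSemiring k] [Semiring A] [Bialgebra k A]
    (lam : A →ₗ[k] k) : Prop :=
  ∀ a : A, TensorProduct.rid k A (lam.lTensor A (Coalgebra.comul (R := k) a)) = lam a • (1 : A)

theorem TensorProduct.rid_rTensor {R M N : Type*} [CommSemiring R] [AddCommMonoid M]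
    [Module R M] [AddCommMonoid N] [Module R N] (f : M →ₗ[R] N) (x : M ⊗[R] R) :
    TensorProduct.rid R N (f.rTensor R x) = f (TensorProduct.rid R M x) := by
  induction x using TensorProduct.induction_on with
  | zero => simp
  | tmul m r => simp
  | add x y hx hy => simp [hx, hy]

section Bialgebra

variable {k A C : Type*} [CommSemiring k] [Semiring A] [Semiring C] [Bialgebra k A]
  [Bialgebra k C]

theorem IsNormalizedCointegral.isCointegral {lam : A →ₗ[k] k}
    (hlam : IsNormalizedCointegral k A lam) : IsCointegral k A lam :=
  hlam.2

open WithConv in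
theorem IsCointegral.toConv_mul {lam : A →ₗ[k] k} (hlam : IsCointegral k A lam)
    (f : A →ₗ[k] k) : toConv f * toConv lam = f 1 • toConv lam := by
  have hf : LinearMap.mul' k k ∘ₗ TensorProduct.map f lam =
      f ∘ₗ (TensorProduct.rid k A).toLinearMap ∘ₗ lam.lTensor A := by
    ext u v
    simp [mul_comm]
  ext a
  rw [LinearMap.convMul_apply, ← LinearMap.comp_apply, ofConv_toConv, ofConv_toConv, hf]
  simp [hlam a, mul_comm]

open WithConv in
theorem IsCointegral.eq_smul [Coalgebra.IsCocomm k A] {μ lam : A →ₗ[k] k}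
    (hμ : IsCointegral k A μ) (hlam : IsNormalizedCointegral k A lam) : μ = μ 1 • lam := by
  have h : μ 1 • toConv lam = lam 1 • toConv μ := by
    rw [← hlam.isCointegral.toConv_mul, mul_comm, hμ.toConv_mul]
  rw [hlam.1, one_smul] at h
  exact congrArg ofConv h.symm

theorem IsNormalizedIntegral.map {σ : A} (hσ : IsNormalizedIntegral k A σ) (f : A →ₐc[k] C)
    (hf : Function.Surjective f) : IsNormalizedIntegral k C (f σ) := by
  refine ⟨fun c => ?_, by rw [CoalgHomClass.counit_comp_apply, hσ.2]⟩
  obtain ⟨a, rfl⟩ := hf c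
  rw [← map_mul, hσ.1, map_smul, CoalgHomClass.counit_comp_apply]

theorem IsCointegral.comp_bialgEquiv {lam : A →ₗ[k] k} (hlam : IsCointegral k A lam)
    (e : A ≃ₐc[k] C) : IsCointegral k C (lam ∘ₗ (e.symm : C →ₗ[k] A)) := by
  intro c
  obtain ⟨a, rfl⟩ : ∃ a, e a = c := ⟨e.symm c, e.apply_symm_apply c⟩
  calc _ = e (TensorProduct.rid k A (lam.lTensor A (Coalgebra.comul a))) := by
        rw [← CoalgHomClass.map_comp_comul_apply e a]
        induction Coalgebra.comul (R := k) a using TensorProduct.induction_on with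
        | zero => simp
        | tmul u v => simp
        | add x y hx hy => simp only [map_add, hx, hy]
    _ = _ := by simp [hlam a]

theorem HasFiniteVolume.of_bialgEquiv (h : HasFiniteVolume k A) (e : A ≃ₐc[k] C) :
    HasFiniteVolume k C := by
  obtain ⟨σ, lam, hσ, hlam, hne⟩ := h
  exact ⟨e σ, lam ∘ₗ (e.symm : C →ₗ[k] A), hσ.map e.toBialgHom e.surjective,
    ⟨by simpa using hlam.1, hlam.isCointegral.comp_bialgEquiv e⟩, by simpa using hne⟩

end Bialgebra

theorem IsNormalizedIntegral.eq {k A : Type*} [CommSemiring k] [CommSemiring A] [Bialgebra k A]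
    {σ σ' : A} (hσ : IsNormalizedIntegral k A σ) (hσ' : IsNormalizedIntegral k A σ') :
    σ = σ' :=
  calc σ = σ' * σ := by rw [hσ.1, hσ'.2, one_smul]
    _ = σ * σ' := mul_comm _ _
    _ = σ' := by rw [hσ'.1, hσ.2, one_smul]

section TensorProduct

variable {k A B : Type*} [CommSemiring k] [Semiring A] [Semiring B] [Bialgebra k A]
  [Bialgebra k B]

theorem IsNormalizedIntegral.tmul {σa : A} {σb : B} (ha : IsNormalizedIntegral k A σa)
    (hb : IsNormalizedIntegral k B σb) : IsNormalizedIntegral k (A ⊗[k] B) (σa ⊗ₜ σb) := by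
  refine ⟨fun x => ?_, by simp [ha.2, hb.2]⟩
  induction x using TensorProduct.induction_on with
  | zero => simp
  | tmul a b =>
    rw [Algebra.TensorProduct.tmul_mul_tmul, ha.1, hb.1, TensorProduct.counit_tmul,
      TensorProduct.smul_tmul_smul, smul_eq_mul, mul_comm]
  | add x y hx hy => rw [add_mul, hx, hy, map_add, add_smul]

variable (k A B) in
noncomputable def Bialgebra.TensorProduct.projLeft : A ⊗[k] B →ₐc[k] A :=
  (Bialgebra.TensorProduct.rid k k A).toBialgHom.comp
    (Bialgebra.TensorProduct.map (BialgHom.id k A) (Bialgebra.counitBialgHom k B))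

open Bialgebra.TensorProduct

@[simp] theorem Bialgebra.TensorProduct.projLeft_tmul (a : A) (b : B) :
    projLeft k A B (a ⊗ₜ b) = Coalgebra.counit (R := k) b • a := rfl

theorem Bialgebra.TensorProduct.projLeft_surjective : Function.Surjective (projLeft k A B) :=
  fun a => ⟨a ⊗ₜ 1, by simp⟩

theorem Bialgebra.TensorProduct.rTensor_projLeft_comul_tmul (a : A) (b : B) :
    (projLeft k A B : A ⊗[k] B →ₗ[k] A).rTensor (A ⊗[k] B) (Coalgebra.comul (a ⊗ₜ b)) =
      ((TensorProduct.mk k A B).flip b).lTensor A (Coalgebra.comul a) := by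
  have hb : b = TensorProduct.lid k B
      ((Coalgebra.counit (R := k)).rTensor B (Coalgebra.comul b)) := by
    simp [Coalgebra.rTensor_counit_comul]
  conv_rhs => rw [hb]
  rw [TensorProduct.comul_tmul]
  induction Coalgebra.comul (R := k) a using TensorProduct.induction_on with
  | zero => simp
  | add x y hx hy => simp only [TensorProduct.add_tmul, map_add, hx, hy]
  | tmul u v =>
    induction Coalgebra.comul (R := k) b using TensorProduct.induction_on with
    | zero => simp
    | add x y hx hy =>
      simp only [TensorProduct.tmul_add, map_add, LinearMap.lTensor_add, LinearMap.add_apply,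
        hx, hy]
    | tmul y₁ y₂ => simp [TensorProduct.smul_tmul']

theorem IsCointegral.comp_flip_mk {lam : A ⊗[k] B →ₗ[k] k}
    (hlam : IsCointegral k (A ⊗[k] B) lam) (b : B) :
    IsCointegral k A (lam ∘ₗ (TensorProduct.mk k A B).flip b) := by
  intro a
  have hcomm (z : (A ⊗[k] B) ⊗[k] (A ⊗[k] B)) :
      lam.lTensor A ((projLeft k A B : A ⊗[k] B →ₗ[k] A).rTensor _ z) =
        (projLeft k A B : A ⊗[k] B →ₗ[k] A).rTensor k (lam.lTensor _ z) := by
    rw [← LinearMap.comp_apply, LinearMap.lTensor_comp_rTensor, ← LinearMap.rTensor_comp_lTensor,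
      LinearMap.comp_apply]
  calc _ = TensorProduct.rid k A (lam.lTensor A
        (((TensorProduct.mk k A B).flip b).lTensor A (Coalgebra.comul a))) := by
        rw [LinearMap.lTensor_comp_apply]
    _ = projLeft k A B (TensorProduct.rid k _ (lam.lTensor _ (Coalgebra.comul (a ⊗ₜ b)))) := by
        rw [← rTensor_projLeft_comul_tmul, hcomm, TensorProduct.rid_rTensor]; rfl
    _ = _ := by rw [hlam (a ⊗ₜ b), map_smul, map_one]; rfl

theorem IsNormalizedIntegral.exists_eq_tmul {k A B : Type*} [CommSemiring k] [CommSemiring A]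
    [CommSemiring B] [Bialgebra k A] [Bialgebra k B] {σ : A ⊗[k] B}
    (hσ : IsNormalizedIntegral k (A ⊗[k] B) σ) :
    ∃ (σa : A) (σb : B), IsNormalizedIntegral k A σa ∧ IsNormalizedIntegral k B σb ∧
      σ = σa ⊗ₜ σb := by
  have hσa := hσ.map (projLeft k A B) projLeft_surjective
  have hσb := (hσ.map (comm k A B).toBialgHom (comm k A B).surjective).map (projLeft k B A)
    projLeft_surjective
  exact ⟨_, _, hσa, hσb, hσ.eq (hσa.tmul hσb)⟩

theorem HasFiniteVolume.of_tensorProduct_left {k A B : Type*} [CommSemiring k] [CommSemiring A]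
    [CommSemiring B] [Bialgebra k A] [Bialgebra k B] [Coalgebra.IsCocomm k A]
    (h : HasFiniteVolume k (A ⊗[k] B)) : HasFiniteVolume k A := by
  obtain ⟨σ, lam, hσ, hlam, hne⟩ := h
  obtain ⟨σa, σb, hσa, -, rfl⟩ := hσ.exists_eq_tmul
  have hlamA : IsNormalizedCointegral k A (lam ∘ₗ (TensorProduct.mk k A B).flip 1) :=
    ⟨hlam.1, hlam.isCointegral.comp_flip_mk 1⟩
  have hfactor : lam (σa ⊗ₜ σb) = lam (1 ⊗ₜ σb) * lam (σa ⊗ₜ 1) :=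
    LinearMap.congr_fun ((hlam.isCointegral.comp_flip_mk σb).eq_smul hlamA) σa
  exact ⟨σa, _, hσa, hlamA, fun h0 => hne (by rw [hfactor]; exact mul_eq_zero_of_right _ h0)⟩

end TensorProduct

/-- If the tensor product `A ⊗[k] B` of two bicommutative Hopf algebras (with its standard
tensor-product Hopf algebra structure) has a finite volume, then so do `A` and `B`. -/
theorem finite_volume_of_tensor_finite_volume
    (k A B : Type u) [Field k] [CommRing A] [CommRing B]
    [HopfAlgebra k A] [HopfAlgebra k B] (hA : IsCocomm k A) (hB : IsCocomm k B)
    (h : ∃ (σ : A ⊗[k] B) (lam : A ⊗[k] B →ₗ[k] k),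
        IsNormalizedIntegral k (A ⊗[k] B) σ ∧ IsNormalizedCointegral k (A ⊗[k] B) lam ∧
          lam σ ≠ 0) :
    (∃ (σa : A) (lama : A →ₗ[k] k),
        IsNormalizedIntegral k A σa ∧ IsNormalizedCointegral k A lama ∧ lama σa ≠ 0) ∧
    (∃ (σb : B) (lamb : B →ₗ[k] k),
        IsNormalizedIntegral k B σb ∧ IsNormalizedCointegral k B lamb ∧ lamb σb ≠ 0) := by
  have : Coalgebra.IsCocomm k A := ⟨LinearMap.ext hA⟩
  have : Coalgebra.IsCocomm k B := ⟨LinearMap.ext hB⟩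
  exact ⟨HasFiniteVolume.of_tensorProduct_left h, HasFiniteVolume.of_tensorProduct_left
    (HasFiniteVolume.of_bialgEquiv (A := A ⊗[k] B) h (Bialgebra.TensorProduct.comm k A B))⟩
end

section
/- Let k be a field of characteristic 2 and let A be a bicommutative Hopf algebra over k with a finite volume (i.e. admitting a normalized integral σ and a normalized cointegral λ with λ(σ) ≠ 0). Then the image of the dimension of A in k equals 1, i.e. (Module.finrank k A : k) = 1; equivalently, dim_k A is odd. -/
open TensorProduct

/-!
Write `Δσ = ∑ⱼ pⱼ ⊗ qⱼ`. The integral property and the antipode axiom give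
`(1 ⊗ a) Δσ = (S a ⊗ 1) Δσ`, and applying `id ⊗ λ` turns this into `∑ⱼ λ(a qⱼ) pⱼ = λ(σ) S a`.
As `A` is commutative, `S² = id`, so the rank-one maps `a ↦ λ(S a · qⱼ) pⱼ` sum to `λ(σ) · id`;
in particular `A` is finite-dimensional. With `M i j = λ(S pⱼ · qᵢ)`, the traces of this identity
and of its square give `λ(σ) · dim A = tr M = λ(ε(σ) 1) = 1` and `λ(σ)² · dim A = tr M²`.
In characteristic two `tr M² = (tr M)²`, hence `λ(σ) = 1` and `dim A = 1` in `k`.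
-/

namespace Coalgebra

variable {R A ι : Type*} [CommSemiring R] [AddCommMonoid A] [Module R A] [Coalgebra R A]

theorem sum_counit_right_smul_left {a : A} (𝓡 : Repr R a ι) :
    ∑ i ∈ 𝓡.index, counit (R := R) (𝓡.right i) • 𝓡.left i = a := by
  have h := congr(_root_.TensorProduct.rid R A $(sum_tmul_counit_eq 𝓡))
  simpa only [map_sum, _root_.TensorProduct.rid_tmul, one_smul] using h

end Coalgebra

namespace HopfAlgebra

open Coalgebra

-- In the convolution group of algebra maps `A →ₐ A`, the inverse of `f` is `f ∘ S`.
theorem antipode_antipode {R A : Type*} [CommSemiring R] [CommSemiring A] [HopfAlgebra R A]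
    (a : A) : antipode R (antipode R a) = a :=
  calc antipode R (antipode R a) = ((WithConv.toConv (AlgHom.id R A))⁻¹⁻¹).ofConv a := rfl
    _ = a := by rw [inv_inv]; rfl

variable {R A ι : Type*} [CommSemiring R] [Semiring A] [HopfAlgebra R A]

theorem sum_antipode_tmul_one_mul_comul {a : A} (𝓡 : Repr R a ι) :
    ∑ i ∈ 𝓡.index, (antipode R (𝓡.left i) ⊗ₜ[R] (1 : A)) * comul (𝓡.right i) = 1 ⊗ₜ a := by
  let Θ : A ⊗[R] (A ⊗[R] A) →ₗ[R] A ⊗[R] A :=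
    (LinearMap.mul' R A ∘ₗ (antipode R).rTensor A).rTensor A ∘ₗ
      (TensorProduct.assoc R A A A).symm.toLinearMap
  have hΘ (x y z : A) : Θ (x ⊗ₜ (y ⊗ₜ z)) = (antipode R x * y) ⊗ₜ z := by simp [Θ]
  have coassoc := congrArg Θ (sum_tmul_tmul_eq 𝓡 (fun i => ℛ R (𝓡.left i))
    (fun i => ℛ R (𝓡.right i)))
  simp only [map_sum, hΘ, ← TensorProduct.sum_tmul, sum_antipode_mul_eq_smul,
    TensorProduct.smul_tmul] at coassoc
  rw [← TensorProduct.tmul_sum, sum_counit_smul] at coassoc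
  rw [coassoc]
  refine Finset.sum_congr rfl fun i _ => ?_
  rw [← (ℛ R (𝓡.right i)).eq, Finset.mul_sum]
  simp only [Algebra.TensorProduct.tmul_mul_tmul, one_mul]

theorem one_tmul_mul_comul_of_integral {σ : A} (hσ : ∀ a : A, a * σ = counit (R := R) a • σ)
    (a : A) : ((1 : A) ⊗ₜ[R] a) * comul σ = (antipode R a ⊗ₜ[R] (1 : A)) * comul σ := by
  let 𝓡 := ℛ R a
  calc ((1 : A) ⊗ₜ[R] a) * comul σ
      = ∑ i ∈ 𝓡.index, (antipode R (𝓡.left i) ⊗ₜ[R] (1 : A)) * comul (𝓡.right i * σ) := by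
        simp only [← sum_antipode_tmul_one_mul_comul 𝓡, Finset.sum_mul, Bialgebra.comul_mul,
          mul_assoc]
    _ = ∑ i ∈ 𝓡.index, (antipode R (counit (R := R) (𝓡.right i) • 𝓡.left i) ⊗ₜ[R] (1 : A)) *
          comul σ := by
        simp only [hσ, map_smul, ← TensorProduct.smul_tmul', smul_mul_assoc, mul_smul_comm]
    _ = (antipode R a ⊗ₜ[R] (1 : A)) * comul σ := by
        rw [← Finset.sum_mul, ← TensorProduct.sum_tmul, ← map_sum, sum_counit_right_smul_left]

theorem sum_apply_mul_right_smul_left_eq_smul_antipode {σ : A}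
    (hσ : ∀ a : A, a * σ = counit (R := R) a • σ) {lam : A →ₗ[R] R}
    (hlam : ∀ a : A, TensorProduct.rid R A (TensorProduct.map LinearMap.id lam (comul a)) =
      lam a • (1 : A))
    (𝓡 : Repr R σ ι) (a : A) :
    ∑ j ∈ 𝓡.index, lam (a * 𝓡.right j) • 𝓡.left j = lam σ • antipode R a := by
  have h := congr(TensorProduct.rid R A (TensorProduct.map LinearMap.id lam
    $(one_tmul_mul_comul_of_integral hσ a)))
  have hσ' := hlam σ
  rw [← 𝓡.eq] at h hσ'
  simp only [Finset.mul_sum, Algebra.TensorProduct.tmul_mul_tmul, one_mul, map_sum,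
    TensorProduct.map_tmul, LinearMap.id_apply, TensorProduct.rid_tmul] at h hσ'
  rw [h, ← mul_smul_one, ← hσ', Finset.mul_sum]
  simp_rw [mul_smul_comm]

end HopfAlgebra

namespace CharTwo

variable {R ι : Type*} [CommRing R] [CharP R 2]

theorem sum_sum_eq_sum_diag_of_symm [DecidableEq ι] (s : Finset ι) {x : ι → ι → R}
    (hx : ∀ i j, x i j = x j i) : ∑ i ∈ s, ∑ j ∈ s, x i j = ∑ i ∈ s, x i i := by
  have hoff : ∑ p ∈ s.offDiag, x p.1 p.2 = 0 :=
    Finset.sum_involution (fun p _ => p.swap)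
      (fun p _ => by rw [hx p.1 p.2]; exact CharTwo.add_self_eq_zero _)
      (fun p hp _ h => (Finset.mem_offDiag.1 hp).2.2 (congrArg Prod.fst h).symm)
      (fun p hp => by
        simp only [Finset.mem_offDiag] at hp ⊢
        exact ⟨hp.2.1, hp.1, Ne.symm hp.2.2⟩)
      (fun _ _ => rfl)
  rw [← Finset.sum_product', ← Finset.diag_union_offDiag s,
    Finset.sum_union (Finset.disjoint_diag_offDiag s), Finset.sum_diag, hoff, add_zero]

theorem trace_mul_self [Fintype ι] (M : Matrix ι ι R) : (M * M).trace = M.trace ^ 2 := by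
  classical
  simp only [Matrix.trace, Matrix.diag, Matrix.mul_apply, CharTwo.sum_sq]
  rw [sum_sum_eq_sum_diag_of_symm _ (fun i j => mul_comm _ _)]
  simp [sq]

end CharTwo

section ReproducingFamily

open Module LinearMap

variable {k V ι : Type*} [Field k] [AddCommGroup V] [Module k V]

theorem natCast_finrank_eq_one_of_sum_smul_eq [CharP k 2] (s : Finset ι) {p : ι → V}
    {f : ι → V →ₗ[k] k} {c : k} (hc : c ≠ 0) (h : ∀ v, ∑ i ∈ s, f i v • p i = c • v)
    (htr : ∑ i ∈ s, f i (p i) = 1) :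
    (finrank k V : k) = 1 := by
  classical
  set B := Fintype.linearCombination k fun i : s => p i
  set F := LinearMap.pi fun i : s => f i
  set M : Matrix s s k := Matrix.of fun i j => f i (p j)
  have hBF : B ∘ₗ F = c • LinearMap.id := LinearMap.ext fun v => by
    simpa [B, F, Fintype.linearCombination_apply, Finset.sum_attach s (fun i => f i v • p i)]
      using h v
  have hFB : F ∘ₗ B = M.toLin' := by
    refine LinearMap.ext fun x => funext fun i => ?_
    simp [B, F, M, Fintype.linearCombination_apply, Matrix.mulVec, dotProduct, mul_comm]
  have : Module.Finite k V := Module.Finite.of_surjective B fun v =>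
    ⟨F (c⁻¹ • v), by simpa [hc] using congr($hBF (c⁻¹ • v))⟩
  have htrM : M.trace = 1 := by
    simpa [M, Matrix.trace, Finset.sum_attach s (fun i => f i (p i))] using htr
  have h1 : c * finrank k V = 1 := calc
    c * finrank k V = trace k V (B ∘ₗ F) := by simp [hBF]
    _ = trace k (s → k) (F ∘ₗ B) := trace_comp_comm' F B
    _ = 1 := by rw [hFB, Matrix.trace_toLin'_eq, htrM]
  have h2 : c ^ 2 * finrank k V = 1 := calc
    c ^ 2 * finrank k V = trace k V ((B ∘ₗ F) ∘ₗ (B ∘ₗ F)) := by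
      simp [hBF, comp_smul, smul_smul, sq, mul_assoc]
    _ = trace k (s → k) ((F ∘ₗ B) ∘ₗ (F ∘ₗ B)) := by
      simpa only [comp_assoc] using trace_comp_comm' (F ∘ₗ B ∘ₗ F) B
    _ = 1 := by
      rw [hFB, ← Matrix.toLin'_mul, Matrix.trace_toLin'_eq, CharTwo.trace_mul_self, htrM,
        one_pow]
  have hc1 : c = 1 := by linear_combination h2 - c * h1
  simpa [hc1] using h1

end ReproducingFamily

theorem finrank_eq_one_of_char_two_general
    (k A : Type*) [Field k] [CharP k 2] [CommRing A] [HopfAlgebra k A]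
    (σ : A) (lam : A →ₗ[k] k)
    (hσ : IsNormalizedIntegral k A σ) (hlam : IsNormalizedCointegral k A lam)
    (hvol : lam σ ≠ 0) :
    (Module.finrank k A : k) = 1 ∧ Odd (Module.finrank k A) := by
  let 𝓡 := Coalgebra.Repr.arbitrary k σ
  have hdim : (Module.finrank k A : k) = 1 := by
    refine natCast_finrank_eq_one_of_sum_smul_eq 𝓡.index (p := 𝓡.left)
      (f := fun j => lam ∘ₗ LinearMap.mulRight k (𝓡.right j) ∘ₗ HopfAlgebra.antipode k) hvol
      (fun a => ?_) ?_
    · simpa [HopfAlgebra.antipode_antipode] using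
        HopfAlgebra.sum_apply_mul_right_smul_left_eq_smul_antipode hσ.1 hlam.2 𝓡
          (HopfAlgebra.antipode k a)
    · simp only [LinearMap.comp_apply, LinearMap.mulRight_apply]
      rw [← map_sum, HopfAlgebra.sum_antipode_mul_eq_smul, hσ.2, one_smul, hlam.1]
  refine ⟨hdim, Nat.not_even_iff_odd.1 fun heven => one_ne_zero (α := k) ?_⟩
  rw [← hdim, CharTwo.natCast_eq_ite, if_pos heven]

/-- Over a field of characteristic 2, a bicommutative Hopf algebra with a finite volume
has `(dim_k A : k) = 1`; equivalently, `dim_k A` is odd. -/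
theorem finrank_eq_one_of_char_two
    (k A : Type*) [Field k] [CharP k 2] [CommRing A] [HopfAlgebra k A] (hcc : IsCocomm k A)
    (σ : A) (lam : A →ₗ[k] k)
    (hσ : IsNormalizedIntegral k A σ) (hlam : IsNormalizedCointegral k A lam)
    (hvol : lam σ ≠ 0) :
    (Module.finrank k A : k) = 1 ∧ Odd (Module.finrank k A) :=
  finrank_eq_one_of_char_two_general k A σ lam hσ hlam hvol
end

section
/- Let 𝒜 be an abelian category and consider a commutative ladder with vertical morphisms ξ : A₀ → A₁, ξ' : A₁ → A₂ and φ : B₀ → B₁, φ' : B₁ → B₂, and horizontal morphisms h₀ : A₀ → B₀, h₁ : A₁ → B₁, h₂ : A₂ → B₂ satisfying h₁ ∘ ξ = φ ∘ h₀ and h₂ ∘ ξ' = φ' ∘ h₁. Assume both squares are exact in the sense that: the morphism ker ξ → ker φ induced by h₀ is an epimorphism and the morphism coker ξ → coker φ induced by h₁ is a monomorphism (lower square), and the morphism ker ξ' → ker φ' induced by h₁ is an epimorphism and the morphism coker ξ' → coker φ' induced by h₂ is a monomorphism (upper square). Then the image of ∂(ξ', ξ) : ker ξ' → coker ξ is isomorphic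 to the image of ∂(φ', φ) : ker φ' → coker φ. -/
/-!
The connecting morphisms of the two rows fit into a commutative square
`ker ξ' ⟶ ker φ'`, `coker ξ ⟶ coker φ` whose top side (induced by `h₁`) is an epimorphism and
whose bottom side (induced by `h₀`) is a monomorphism. Precomposing with an epimorphism and
postcomposing with a monomorphism do not change the image, since the strong epi-mono
factorisation of a morphism is unique up to isomorphism.
-/

open CategoryTheory CategoryTheory.Limits

variable {𝒜 : Type*} [Category 𝒜] [Abelian 𝒜]

/-- Given a commutative square `f ≫ g = f' ≫ g'`, the induced morphism `ker f' ⟶ ker g`: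
the unique morphism whose composite with the kernel inclusion of `g` is
`kernel.ι f' ≫ f`. -/
noncomputable def squareKerMap {A B C D : 𝒜} (f : A ⟶ B) (f' : A ⟶ C) (g : B ⟶ D)
    (g' : C ⟶ D) (w : f ≫ g = f' ≫ g') : kernel f' ⟶ kernel g :=
  kernel.lift g (kernel.ι f' ≫ f) (by
    rw [Category.assoc, w, ← Category.assoc, kernel.condition, zero_comp])

/-- Given a commutative square `f ≫ g = f' ≫ g'`, the induced morphism
`coker f' ⟶ coker g`: the unique morphism whose precomposition with the cokernel projection
of `f'` is `g' ≫ cokernel.π g`. -/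
noncomputable def squareCokerMap {A B C D : 𝒜} (f : A ⟶ B) (f' : A ⟶ C) (g : B ⟶ D)
    (g' : C ⟶ D) (w : f ≫ g = f' ≫ g') : cokernel f' ⟶ cokernel g :=
  cokernel.desc f' (g' ≫ cokernel.π g) (by
    rw [← Category.assoc, ← w, Category.assoc, cokernel.condition, comp_zero])

/-- The connecting morphism `∂(ξ', ξ) : ker ξ' ⟶ coker ξ` of a composable pair `ξ, ξ'`:
the composite of the kernel inclusion of `ξ'` with the cokernel projection of `ξ`. -/
noncomputable def connectingMap {A₀ A₁ A₂ : 𝒜} (ξ : A₀ ⟶ A₁) (ξ' : A₁ ⟶ A₂) :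
    kernel ξ' ⟶ cokernel ξ :=
  kernel.ι ξ' ≫ cokernel.π ξ

section ImageIso

variable {C : Type*} [Category C] [HasStrongEpiMonoFactorisations C]

noncomputable def imageCompMonoIso {X Y Z : C} (f : X ⟶ Y) (m : Y ⟶ Z) [Mono m] :
    image f ≅ image (f ≫ m) :=
  image.isoStrongEpiMono (factorThruImage f) (image.ι f ≫ m) (image.fac_assoc f m)

noncomputable def imageEpiCompIso [StrongEpiCategory C] {X Y Z : C} (e : X ⟶ Y) (f : Y ⟶ Z)
    [Epi e] : image f ≅ image (e ≫ f) :=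
  letI := strongEpi_of_epi (e ≫ factorThruImage f)
  image.isoStrongEpiMono (e ≫ factorThruImage f) (image.ι f) (by rw [Category.assoc, image.fac])

noncomputable def CategoryTheory.CommSq.imageIsoOfEpiOfMono [StrongEpiCategory C]
    {X Y X' Y' : C} {e : X ⟶ X'} {f : X ⟶ Y} {g : X' ⟶ Y'} {m : Y ⟶ Y'} [Epi e] [Mono m]
    (sq : CommSq e f g m) : image f ≅ image g :=
  imageCompMonoIso f m ≪≫ image.eqToIso sq.w.symm ≪≫ (imageEpiCompIso e g).symm

end ImageIso

theorem connectingMap_commSq {A₀ A₁ A₂ B₀ B₁ B₂ : 𝒜}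
    {ξ : A₀ ⟶ A₁} {ξ' : A₁ ⟶ A₂} {φ : B₀ ⟶ B₁} {φ' : B₁ ⟶ B₂}
    {h₀ : A₀ ⟶ B₀} {h₁ : A₁ ⟶ B₁} {h₂ : A₂ ⟶ B₂}
    (wlow : h₀ ≫ φ = ξ ≫ h₁) (wup : h₁ ≫ φ' = ξ' ≫ h₂) :
    CommSq (squareKerMap h₁ ξ' φ' h₂ wup) (connectingMap ξ ξ') (connectingMap φ φ')
      (squareCokerMap h₀ ξ φ h₁ wlow) :=
  ⟨by simp [squareKerMap, squareCokerMap, connectingMap]⟩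

theorem image_connecting_iso_of_exact_squares_general
    {A₀ A₁ A₂ B₀ B₁ B₂ : 𝒜}
    (ξ : A₀ ⟶ A₁) (ξ' : A₁ ⟶ A₂) (φ : B₀ ⟶ B₁) (φ' : B₁ ⟶ B₂)
    (h₀ : A₀ ⟶ B₀) (h₁ : A₁ ⟶ B₁) (h₂ : A₂ ⟶ B₂)
    (wlow : h₀ ≫ φ = ξ ≫ h₁) (wup : h₁ ≫ φ' = ξ' ≫ h₂)
    (hlowCoker : Mono (squareCokerMap h₀ ξ φ h₁ wlow))
    (hupKer : Epi (squareKerMap h₁ ξ' φ' h₂ wup)) :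
    Nonempty (image (connectingMap ξ ξ') ≅ image (connectingMap φ φ')) :=
  ⟨(connectingMap_commSq wlow wup).imageIsoOfEpiOfMono⟩

/-- Given a commutative ladder whose two squares are exact (the induced kernel
morphisms are epimorphisms and the induced cokernel morphisms are monomorphisms), the
images of the connecting morphisms `∂(ξ', ξ) : ker ξ' ⟶ coker ξ` and
`∂(φ', φ) : ker φ' ⟶ coker φ` are isomorphic. -/
theorem image_connecting_iso_of_exact_squares
    {A₀ A₁ A₂ B₀ B₁ B₂ : 𝒜}
    (ξ : A₀ ⟶ A₁) (ξ' : A₁ ⟶ A₂) (φ : B₀ ⟶ B₁) (φ' : B₁ ⟶ B₂)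
    (h₀ : A₀ ⟶ B₀) (h₁ : A₁ ⟶ B₁) (h₂ : A₂ ⟶ B₂)
    (wlow : h₀ ≫ φ = ξ ≫ h₁) (wup : h₁ ≫ φ' = ξ' ≫ h₂)
    (hlowKer : Epi (squareKerMap h₀ ξ φ h₁ wlow))
    (hlowCoker : Mono (squareCokerMap h₀ ξ φ h₁ wlow))
    (hupKer : Epi (squareKerMap h₁ ξ' φ' h₂ wup))
    (hupCoker : Mono (squareCokerMap h₁ ξ' φ' h₂ wup)) :
    Nonempty (image (connectingMap ξ ξ') ≅ image (connectingMap φ φ')) :=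
  image_connecting_iso_of_exact_squares_general ξ ξ' φ φ' h₀ h₁ h₂ wlow wup hlowCoker hupKer
end

section
/- Let 𝒜 be an abelian category and let f : A → B, f' : A → C, g : B → D, g' : C → D be a commutative square, i.e. g ∘ f = g' ∘ f'. Form the three-term complex A →(u) B ⊞ C →(v) D where u = biprod.lift f (−f') and v = biprod.desc g g' (note v ∘ u = 0 by commutativity). Then the square is exact (i.e. the induced morphism k_□ : ker f' → ker g is an epimorphism and the induced morphism c_□ : coker f' → coker g is a monomorphism) if and only if the complex is exact at the middle term B ⊞ C, i.e. the image of u equals the kernel of v. -/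
/-!
Exactness of `A ⟶ B ⊞ C ⟶ D` at the middle says that, up to refinements, every pair
`(b, c)` with `b ≫ g = c ≫ g'` comes from `A`. Applied to pairs `(b, 0)` with `b ≫ g = 0`
this lifts kernels, so `k_□` is epi; if `c ≫ g'` vanishes modulo the image of `g`, it equals
some `b ≫ g`, and lifting `(b, c)` shows that `c` vanishes modulo the image of `f'`, so `c_□` is
mono. Conversely, `c_□` mono makes `c` come from some `a₁ : A` up to refinement; then
`b - a₁ ≫ f` lies in `ker g`, and `k_□` epi lifts it to `ker f'`, correcting `a₁`.
-/

open CategoryTheory CategoryTheory.Limits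

variable {𝒜 : Type*} [Category 𝒜] [Abelian 𝒜]

lemma exists_lift_of_comp_cokernel_π_eq_zero {X Y T : 𝒜} {f : X ⟶ Y} (y : T ⟶ Y)
    (hy : y ≫ cokernel.π f = 0) :
    ∃ (T' : 𝒜) (π : T' ⟶ T) (_ : Epi π) (x : T' ⟶ X), π ≫ y = x ≫ f :=
  (CokernelCofork.IsColimit.comp_π_eq_zero_iff_up_to_refinements (cokernelIsCokernel f) y).1 hy

section SquareExactness

variable {A B C D : 𝒜} (f : A ⟶ B) (f' : A ⟶ C) (g : B ⟶ D) (g' : C ⟶ D)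

lemma squareKerMap_ι (w : f ≫ g = f' ≫ g') :
    squareKerMap f f' g g' w ≫ kernel.ι g = kernel.ι f' ≫ f :=
  kernel.lift_ι _ _ _

lemma π_squareCokerMap (w : f ≫ g = f' ≫ g') :
    cokernel.π f' ≫ squareCokerMap f f' g g' w = g' ≫ cokernel.π g :=
  cokernel.π_desc _ _ _

def SquareLiftsUpToRefinements : Prop :=
  ∀ ⦃T : 𝒜⦄ (b : T ⟶ B) (c : T ⟶ C), b ≫ g = c ≫ g' →
    ∃ (T' : 𝒜) (π : T' ⟶ T) (_ : Epi π) (a : T' ⟶ A),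
      π ≫ b = a ≫ f ∧ π ≫ c = a ≫ f'

variable {f f' g g'}

lemma exact_iff_squareLiftsUpToRefinements (w : f ≫ g = f' ≫ g') :
    (ShortComplex.mk (biprod.lift f (-f')) (biprod.desc g g') (by simp [w])).Exact ↔
      SquareLiftsUpToRefinements f f' g g' := by
  rw [ShortComplex.exact_iff_exact_up_to_refinements]
  constructor
  · intro h T b c hbc
    obtain ⟨T', π, hπ, a, fac⟩ := h (biprod.lift b (-c)) (by simp [hbc])
    refine ⟨T', π, hπ, a, ?_, ?_⟩
    · simpa using fac =≫ biprod.fst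
    · simpa using fac =≫ biprod.snd
  · intro h T x hx
    dsimp at x hx
    obtain ⟨T', π, hπ, a, hb, hc⟩ := h (x ≫ biprod.fst) (-(x ≫ biprod.snd)) (by
      rw [Preadditive.neg_comp, ← add_eq_zero_iff_eq_neg, Category.assoc, Category.assoc,
        ← Preadditive.comp_add, ← biprod.desc_eq]
      exact hx)
    refine ⟨T', π, hπ, a, ?_⟩
    ext <;> simp [← hb, ← hc]

lemma epi_squareKerMap_of_squareLiftsUpToRefinements (w : f ≫ g = f' ≫ g')
    (h : SquareLiftsUpToRefinements f f' g g') :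
    Epi (squareKerMap f f' g g' w) := by
  rw [epi_iff_surjective_up_to_refinements]
  intro T y
  obtain ⟨T', π, hπ, a, hb, hc⟩ := h (y ≫ kernel.ι g) 0 (by simp)
  refine ⟨T', π, hπ, kernel.lift f' a (by simpa using hc.symm), ?_⟩
  rw [← cancel_mono (kernel.ι g)]
  simp [squareKerMap_ι, hb]

lemma mono_squareCokerMap_of_squareLiftsUpToRefinements (w : f ≫ g = f' ≫ g')
    (h : SquareLiftsUpToRefinements f f' g g') :
    Mono (squareCokerMap f f' g g' w) := by
  rw [Preadditive.mono_iff_cancel_zero]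
  intro T z hz
  obtain ⟨T₁, π₁, hπ₁, c, hc⟩ := surjective_up_to_refinements_of_epi (cokernel.π f') z
  obtain ⟨T₂, π₂, hπ₂, b, hb⟩ := exists_lift_of_comp_cokernel_π_eq_zero (c ≫ g') (by
    rw [Category.assoc, ← π_squareCokerMap f f' g g' w, ← reassoc_of% hc, hz, comp_zero])
  obtain ⟨T₃, π₃, hπ₃, a, -, ha⟩ := h b (π₂ ≫ c) (by simpa using hb.symm)
  rw [← cancel_epi (π₃ ≫ π₂ ≫ π₁)]
  simp [hc, reassoc_of% ha]

lemma squareLiftsUpToRefinements_of_epi_of_mono (w : f ≫ g = f' ≫ g')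
    [Epi (squareKerMap f f' g g' w)] [Mono (squareCokerMap f f' g g' w)] :
    SquareLiftsUpToRefinements f f' g g' := by
  intro T b c hbc
  obtain ⟨T₁, π₁, hπ₁, a₁, ha₁⟩ := exists_lift_of_comp_cokernel_π_eq_zero c (by
    rw [← cancel_mono (squareCokerMap f f' g g' w), Category.assoc, π_squareCokerMap,
      ← reassoc_of% hbc]
    simp)
  obtain ⟨T₂, π₂, hπ₂, k, hk⟩ := surjective_up_to_refinements_of_epi
    (squareKerMap f f' g g' w) (kernel.lift g (π₁ ≫ b - a₁ ≫ f) (by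
      rw [Preadditive.sub_comp, Category.assoc, hbc, reassoc_of% ha₁, Category.assoc, w,
        sub_self]))
  have hk' := hk =≫ kernel.ι g
  simp only [Category.assoc, kernel.lift_ι, squareKerMap_ι] at hk'
  refine ⟨T₂, π₂ ≫ π₁, epi_comp _ _, k ≫ kernel.ι f' + π₂ ≫ a₁, ?_, ?_⟩
  · simp [← hk']
  · simp [ha₁]

end SquareExactness

/-- A commutative square `f ≫ g = f' ≫ g'` is exact (the induced morphism
`ker f' ⟶ ker g` is epi and the induced morphism `coker f' ⟶ coker g` is mono) if and only
if the induced three-term complex `A ⟶ B ⊞ C ⟶ D`, with first map `biprod.lift f (-f')`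
and second map `biprod.desc g g'`, is exact at the middle term. -/
theorem square_exact_iff_complex_exact
    {A B C D : 𝒜} (f : A ⟶ B) (f' : A ⟶ C) (g : B ⟶ D) (g' : C ⟶ D)
    (w : f ≫ g = f' ≫ g') :
    (Epi (squareKerMap f f' g g' w) ∧ Mono (squareCokerMap f f' g g' w)) ↔
      (ShortComplex.mk (biprod.lift f (-f')) (biprod.desc g g')
        (by simp [w])).Exact := by
  rw [exact_iff_squareLiftsUpToRefinements w]
  exact ⟨fun ⟨_, _⟩ ↦ squareLiftsUpToRefinements_of_epi_of_mono w, fun h ↦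
    ⟨epi_squareKerMap_of_squareLiftsUpToRefinements w h,
      mono_squareCokerMap_of_squareLiftsUpToRefinements w h⟩⟩
end
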